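/- If V is a discrete gradient vector field on a finite simplicial complex K (i.e., V has no nontrivial closed V-paths), then the number of critical p-simplices of V is at least the p-th Betti number of K, for every p. -/

import Mathlib

/-- An abstract finite simplicial complex on vertex type `α`. -/
structure AbsComplex (α : Type*) [DecidableEq α] where
  faces : Finset (Finset α)
  nonempty_of_mem : ∀ σ ∈ faces, σ.Nonempty
  down_closed : ∀ σ ∈ faces, ∀ τ ⊆ σ, τ.Nonempty → τ ∈ faces

variable {α : Type*} [DecidableEq α] [LinearOrder α]

/-- The `p`-dimensional simplices of `K` (those with `p + 1` vertices). -/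
def pCells (K : AbsComplex α) (p : ℕ) : Finset (Finset α) :=
  K.faces.filter fun σ => σ.card = p + 1

/-- The simplicial boundary matrix `∂_{p+1}` over `ℚ`, with the usual signs coming
from the ordering of the vertices. -/
noncomputable def bdry (K : AbsComplex α) (p : ℕ) :
    Matrix ↥(pCells K p) ↥(pCells K (p + 1)) ℚ :=
  fun τ σ =>
    if τ.1 ⊆ σ.1 then
      ∑ a ∈ σ.1 \ τ.1, (-1 : ℚ) ^ (List.idxOf a (σ.1.sort (· ≤ ·)))
    else 0

/-- The `p`-th Betti number of `K`: the rank over `ℚ` of the `p`-th simplicial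
homology, computed as `dim C_p - rank ∂_p - rank ∂_{p+1}`. -/
noncomputable def betti (K : AbsComplex α) : ℕ → ℕ
  | 0 => (pCells K 0).card - (bdry K 0).rank
  | p + 1 => (pCells K (p + 1)).card - (bdry K p).rank - (bdry K (p + 1)).rank

/-- A discrete vector field on `K`. -/
def IsDVF (K : AbsComplex α) (V : Finset (Finset α × Finset α)) : Prop :=
  (∀ p ∈ V, p.1 ∈ K.faces ∧ p.2 ∈ K.faces ∧ p.1 ⊆ p.2 ∧ p.2.card = p.1.card + 1) ∧
  (∀ σ : Finset α, (V.filter (fun p => p.1 = σ ∨ p.2 = σ)).card ≤ 1)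

/-- A simplex is critical for `V` if it appears in no pair of `V`. -/
def IsCritical (V : Finset (Finset α × Finset α)) (σ : Finset α) : Prop :=
  ∀ p ∈ V, p.1 ≠ σ ∧ p.2 ≠ σ

/-- The list `L = [(τ₀,σ₀), (τ₁,σ₁), …]` is a V-path chain: every pair belongs to
`V` and consecutive pairs satisfy `τ_{i+1} < σ_i`, `τ_{i+1} ≠ τ_i`. -/
def IsVChain (V : Finset (Finset α × Finset α)) (L : List (Finset α × Finset α)) : Prop :=
  (∀ p ∈ L, p ∈ V) ∧ L.Chain' (fun p q => q.1 ⊆ p.2 ∧ q.1 ≠ p.1)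

/-- `V` has a nontrivial closed V-path `τ₀, σ₀, …, σ_r, τ_{r+1} = τ₀`. -/
def HasClosedVPath (V : Finset (Finset α × Finset α)) : Prop :=
  ∃ (p : Finset α × Finset α) (L : List (Finset α × Finset α)),
    IsVChain V (p :: L) ∧
    p.1 ⊆ ((p :: L).getLast (List.cons_ne_nil p L)).2 ∧
    p.1 ≠ ((p :: L).getLast (List.cons_ne_nil p L)).1

/-- A discrete gradient vector field: a discrete vector field with no nontrivial
closed V-paths. -/
def IsGradient (K : AbsComplex α) (V : Finset (Finset α × Finset α)) : Prop :=
  IsDVF K V ∧ ¬ HasClosedVPath V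

/-! A non-critical `p`-simplex is the first or the second member of a pair of `V`, so it
suffices to bound the number of pairs `(τ, σ)` of dimension `(p, p + 1)` by `rank ∂_{p+1}`.
These pairs index a square submatrix of `∂_{p+1}` with diagonal entries `±1`. In the Leibniz
expansion of its determinant, a permutation with nonzero term sends each pair `(τ, σ)` it moves
to a pair `(τ', σ')` with `τ' ⊂ σ`, `τ' ≠ τ`, so each of its cycles is a closed V-path. Hence only
the identity contributes, the determinant is `±1`, and the submatrix has full rank. -/

open Finset Relation

theorem Equiv.Perm.eq_one_of_forall_rel_apply {ι : Type*} [Finite ι] {r : ι → ι → Prop}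
    (hr : ∀ i, ¬ TransGen r i i) (π : Equiv.Perm ι) (hπ : ∀ i, π i ≠ i → r i (π i)) :
    π = 1 := by
  by_contra hne
  obtain ⟨i₀, hi₀⟩ : ∃ i₀, π i₀ ≠ i₀ := by
    by_contra! h
    exact hne (Equiv.ext h)
  have hmoved (n : ℕ) : π ((π ^ n) i₀) ≠ (π ^ n) i₀ := by
    rw [← Equiv.Perm.mul_apply, ← pow_succ', pow_succ, Equiv.Perm.mul_apply]
    exact (π ^ n).injective.ne hi₀
  have horbit (n : ℕ) : TransGen r i₀ ((π ^ (n + 1)) i₀) := by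
    induction n with
    | zero => simpa using TransGen.single (hπ i₀ hi₀)
    | succ n ih =>
      rw [pow_succ', Equiv.Perm.mul_apply]
      exact ih.tail (hπ _ (hmoved (n + 1)))
  obtain ⟨n, hn⟩ := Nat.exists_eq_add_one_of_ne_zero (orderOf_pos π).ne'
  have := horbit n
  rw [← hn, pow_orderOf_eq_one] at this
  exact hr i₀ this

theorem Matrix.det_eq_prod_diag_of_acyclic {ι R : Type*} [Fintype ι] [DecidableEq ι]
    [CommRing R] (M : Matrix ι ι R) {r : ι → ι → Prop} (hr : ∀ i, ¬ TransGen r i i)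
    (hM : ∀ i j, i ≠ j → M i j ≠ 0 → r j i) : M.det = ∏ i, M i i := by
  rw [Matrix.det_apply, Finset.sum_eq_single (1 : Equiv.Perm ι)]
  · simp
  · intro π _ hπ
    suffices ∃ i, M (π i) i = 0 by
      obtain ⟨i, hi⟩ := this
      exact smul_eq_zero_of_right _ (Finset.prod_eq_zero (Finset.mem_univ i) hi)
    by_contra! h
    exact hπ (π.eq_one_of_forall_rel_apply hr fun i hi => hM _ _ hi (h i))
  · simp

section

variable {α : Type*} {V : Finset (Finset α × Finset α)}

/-- One step `(τᵢ, σᵢ) → (τᵢ₊₁, σᵢ₊₁)` of a V-path. -/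
def VStep (q q' : Finset α × Finset α) : Prop :=
  q'.1 ⊆ q.2 ∧ q'.1 ≠ q.1

theorem hasClosedVPath_of_transGen {ι : Type*} (f : ι → Finset α × Finset α)
    (hf : ∀ i, f i ∈ V) {i : ι} (h : TransGen (fun i j => VStep (f i) (f j)) i i) :
    HasClosedVPath V := by
  obtain ⟨j, hij, hji⟩ := TransGen.head'_iff.1 h
  obtain ⟨l, hl, hlast⟩ := List.exists_isChain_cons_of_relationReflTransGen hji
  refine ⟨f j, l.map f, ⟨?_, (List.isChain_map f (l := j :: l)).2 hl⟩, ?_⟩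
  · simp only [← List.map_cons, List.mem_map]
    rintro _ ⟨k, -, rfl⟩
    exact hf k
  · have : (f j :: l.map f).getLast (List.cons_ne_nil _ _) = f i := by
      simp only [← List.map_cons, List.getLast_map, hlast]
    rw [this]
    exact hij

variable [DecidableEq α] {K : AbsComplex α}

namespace IsDVF

theorem eq_of_fst_eq (hV : IsDVF K V) {q q' : Finset α × Finset α} (hq : q ∈ V)
    (hq' : q' ∈ V) (h : q.1 = q'.1) : q = q' := by
  by_contra hne
  have hsub : ({q, q'} : Finset _) ⊆ V.filter (fun p => p.1 = q.1 ∨ p.2 = q.1) := by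
    simp [Finset.insert_subset_iff, hq, hq', h]
  have := (Finset.card_le_card hsub).trans (hV.2 q.1)
  rw [Finset.card_pair hne] at this
  omega

theorem filter_snd_card_eq (hV : IsDVF K V) (n : ℕ) :
    V.filter (fun q => q.2.card = n + 1) = V.filter (fun q => q.1.card = n) := by
  refine Finset.filter_congr fun q hq => ?_
  rw [(hV.1 q hq).2.2.2]
  omega

theorem filter_fst_card_eq_zero (hV : IsDVF K V) :
    V.filter (fun q => q.1.card = 0) = ∅ :=
  Finset.filter_false_of_mem fun q hq =>
    (K.nonempty_of_mem q.1 (hV.1 q hq).1).card_pos.ne'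

theorem fst_mem_pCells (hV : IsDVF K V) {q : Finset α × Finset α} (hq : q ∈ V) {p : ℕ}
    (h : q.1.card = p + 1) : q.1 ∈ pCells K p :=
  Finset.mem_filter.2 ⟨(hV.1 q hq).1, h⟩

theorem snd_mem_pCells (hV : IsDVF K V) {q : Finset α × Finset α} (hq : q ∈ V) {p : ℕ}
    (h : q.1.card = p + 1) : q.2 ∈ pCells K (p + 1) :=
  Finset.mem_filter.2 ⟨(hV.1 q hq).2.1, by rw [(hV.1 q hq).2.2.2, h]⟩

end IsDVF

theorem card_pCells_le_card_critical_add (p : ℕ) :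
    #(pCells K p) ≤ #((pCells K p).filter fun σ => ∀ q ∈ V, q.1 ≠ σ ∧ q.2 ≠ σ) +
      #(V.filter fun q => q.1.card = p + 1) + #(V.filter fun q => q.2.card = p + 1) := by
  rw [← Finset.card_filter_add_card_filter_not (s := pCells K p)
    (fun σ => ∀ q ∈ V, q.1 ≠ σ ∧ q.2 ≠ σ), add_assoc]
  gcongr
  calc _ ≤ #((V.filter fun q => q.1.card = p + 1).image Prod.fst ∪
          (V.filter fun q => q.2.card = p + 1).image Prod.snd) := by
        refine Finset.card_le_card fun σ hσ => ?_
        obtain ⟨hcell, hcrit⟩ := Finset.mem_filter.1 hσ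
        have hcard : σ.card = p + 1 := (Finset.mem_filter.1 hcell).2
        push Not at hcrit
        obtain ⟨q, hq, hqσ⟩ := hcrit
        by_cases h : q.1 = σ
        · exact Finset.mem_union_left _ (Finset.mem_image.2 ⟨q, by simp [hq, h, hcard], h⟩)
        · exact Finset.mem_union_right _
            (Finset.mem_image.2 ⟨q, by simp [hq, hqσ h, hcard], hqσ h⟩)
    _ ≤ _ := (Finset.card_union_le _ _).trans
      (add_le_add Finset.card_image_le Finset.card_image_le)

end

variable {K : AbsComplex α} {V : Finset (Finset α × Finset α)}

theorem bdry_ne_zero_of_subset {p : ℕ} {τ : pCells K p}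
    {σ : pCells K (p + 1)} (h : τ.1 ⊆ σ.1) : bdry K p τ σ ≠ 0 := by
  have hτ : τ.1.card = p + 1 := (Finset.mem_filter.1 τ.2).2
  have hσ : σ.1.card = p + 2 := (Finset.mem_filter.1 σ.2).2
  obtain ⟨a, ha⟩ : ∃ a, σ.1 \ τ.1 = {a} := by
    rw [← Finset.card_eq_one, Finset.card_sdiff_of_subset h, hσ, hτ]
    omega
  simp only [bdry, if_pos h, ha, Finset.sum_singleton]
  exact pow_ne_zero _ (by norm_num)

theorem subset_of_bdry_ne_zero {p : ℕ} {τ : pCells K p}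
    {σ : pCells K (p + 1)} (h : bdry K p τ σ ≠ 0) : τ.1 ⊆ σ.1 := by
  by_contra hsub
  simp [bdry, hsub] at h

theorem IsGradient.card_filter_fst_card_le_rank_bdry (hV : IsGradient K V) (p : ℕ) :
    #(V.filter fun q => q.1.card = p + 1) ≤ (bdry K p).rank := by
  set S := V.filter fun q => q.1.card = p + 1
  have hSV (q : S) : q.1 ∈ V := (Finset.mem_filter.1 q.2).1
  have hScard (q : S) : q.1.1.card = p + 1 := (Finset.mem_filter.1 q.2).2
  let M := (bdry K p).submatrix (fun q : S => ⟨q.1.1, hV.1.fst_mem_pCells (hSV q) (hScard q)⟩)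
    (fun q : S => ⟨q.1.2, hV.1.snd_mem_pCells (hSV q) (hScard q)⟩)
  have hacyclic (q : S) : ¬ TransGen (fun i j : S => VStep i.1 j.1) q q :=
    fun h => hV.2 (hasClosedVPath_of_transGen _ hSV h)
  have hsupport (i j : S) (hij : i ≠ j) (hM : M i j ≠ 0) : VStep j.1 i.1 :=
    ⟨subset_of_bdry_ne_zero hM,
      fun h => hij (Subtype.ext (hV.1.eq_of_fst_eq (hSV i) (hSV j) h))⟩
  have hdet : M.det ≠ 0 := by
    rw [M.det_eq_prod_diag_of_acyclic hacyclic hsupport]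
    exact Finset.prod_ne_zero_iff.2 fun q _ =>
      bdry_ne_zero_of_subset (hV.1.1 q.1 (hSV q)).2.2.1
  calc #S = M.rank := by
        rw [Matrix.rank_of_isUnit M ((Matrix.isUnit_iff_isUnit_det M).2 hdet.isUnit),
          Fintype.card_coe]
    _ ≤ (bdry K p).rank := Matrix.rank_submatrix_le _ _ _

/-- **discrete Morse inequality.** For a discrete gradient vector
field `V` on a finite simplicial complex `K`, the number of critical
`p`-simplices is at least the `p`-th Betti number of `K`, for every `p`. -/
theorem morse_inequality (K : AbsComplex α) (V : Finset (Finset α × Finset α))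
    (hV : IsGradient K V) (p : ℕ) :
    betti K p ≤ ((pCells K p).filter fun σ => ∀ q ∈ V, q.1 ≠ σ ∧ q.2 ≠ σ).card := by
  have hcells := card_pCells_le_card_critical_add (K := K) (V := V) p
  have hup := hV.card_filter_fst_card_le_rank_bdry p
  rw [hV.1.filter_snd_card_eq] at hcells
  cases p with
  | zero =>
    rw [hV.1.filter_fst_card_eq_zero, Finset.card_empty] at hcells
    simp only [betti]
    omega
  | succ d =>
    have hdown := hV.card_filter_fst_card_le_rank_bdry d
    simp only [betti]
    omega
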